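/- For every integer ℓ with 1 ≤ ℓ ≤ n−1 there exist constants ε_0 = ε_0(n,ℓ) > 0 and c = c(n,ℓ) > 0 such that for every ε ∈ (0, ε_0) one has c · ε^{nℓ} ≤ μ_X({Λ ∈ X : β_ℓ(Λ) ≤ ε}) and c · ε^n ≤ μ_X({Λ ∈ X : ∏_{j=1}^ℓ β_j(Λ) ≤ ε}). -/

import Mathlib

open MeasureTheory Matrix Filter Topology
open scoped NNReal ENNReal

noncomputable section

/-- `G = SL_n(ℝ)`, with its natural topology as a subtype of the space of matrices. -/
instance SLtop (n : ℕ) : TopologicalSpace (Matrix.SpecialLinearGroup (Fin n) ℝ) :=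
  instTopologicalSpaceSubtype

/-- `Γ = SL_n(ℤ)`, viewed as a subgroup of `G = SL_n(ℝ)`. -/
def SLZ (n : ℕ) : Subgroup (Matrix.SpecialLinearGroup (Fin n) ℝ) :=
  (Matrix.SpecialLinearGroup.map (n := Fin n) (Int.castRingHom ℝ)).range

/-- `X = Γ \ G`, the space of right cosets `Γg`. -/
def XSpace (n : ℕ) : Type :=
  Quotient (QuotientGroup.rightRel (SLZ n))

instance XSpaceTop (n : ℕ) : TopologicalSpace (XSpace n) :=
  instTopologicalSpaceQuotient

/-- `X` is equipped with its Borel σ-algebra. -/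
instance XSpaceMeas (n : ℕ) : MeasurableSpace (XSpace n) := borel _

/-- The right action of `G` on `X = Γ\G`, `(Γh)·g = Γ(hg)`. -/
def xmul {n : ℕ} (x : XSpace n) (g : Matrix.SpecialLinearGroup (Fin n) ℝ) : XSpace n :=
  Quotient.mk (QuotientGroup.rightRel (SLZ n)) (Quotient.out x * g)

/-- The lattice `ℤ^n · g ⊆ ℝ^n` attached to `g ∈ SL_n(ℝ)` (row vectors, acted on by
right matrix multiplication), viewed inside Euclidean space. -/
def latticeOf {n : ℕ} (g : Matrix.SpecialLinearGroup (Fin n) ℝ) :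
    Set (EuclideanSpace ℝ (Fin n)) :=
  {v | ∃ m : Fin n → ℤ,
      v = (WithLp.equiv 2 (Fin n → ℝ)).symm
        (Matrix.vecMul (fun i => (m i : ℝ)) (g : Matrix (Fin n) (Fin n) ℝ))}

/-- The lattice attached to a point of `X = Γ\G`; this is well defined since
`ℤ^n · γ = ℤ^n` for `γ ∈ SL_n(ℤ)`, so the choice of representative is immaterial. -/
def latticeX {n : ℕ} (x : XSpace n) : Set (EuclideanSpace ℝ (Fin n)) :=
  latticeOf (Quotient.out x)

/-- `beta k x` is the `k`-th successive minimum (`1`-based) of the lattice attached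
to `x`, with respect to the Euclidean norm:
`β_k(Λ) = inf {r > 0 : dim span (B_r ∩ Λ) ≥ k}`. -/
def beta {n : ℕ} (k : ℕ) (x : XSpace n) : ℝ :=
  sInf {r : ℝ | 0 < r ∧
    k ≤ Module.finrank ℝ
      ↥(Submodule.span ℝ (Metric.closedBall (0 : EuclideanSpace ℝ (Fin n)) r ∩ latticeX x))}

/-- The Siegel-type transform `^kF^` : the sum of `F` over all `k`-tuples of nonzero
vectors of the lattice attached to `x`, with values in `[0,∞]`. -/
def siegelHat {n : ℕ} (k : ℕ) (F : (Fin k → EuclideanSpace ℝ (Fin n)) → ℝ≥0)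
    (x : XSpace n) : ℝ≥0∞ :=
  ∑' v : Fin k → {w : EuclideanSpace ℝ (Fin n) // w ∈ latticeX x ∧ w ≠ 0},
    (F (fun i => (v i : EuclideanSpace ℝ (Fin n))) : ℝ≥0∞)

/-- The Siegel-type transform `^kF~` : the sum of `F` over all `k`-tuples of vectors
of the lattice attached to `x` whose real span has dimension `k`, with values in `[0,∞]`. -/
def siegelTilde {n : ℕ} (k : ℕ) (F : (Fin k → EuclideanSpace ℝ (Fin n)) → ℝ≥0)
    (x : XSpace n) : ℝ≥0∞ :=
  ∑' v : {v : Fin k → EuclideanSpace ℝ (Fin n) //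
      (∀ i, v i ∈ latticeX x) ∧
      Module.finrank ℝ ↥(Submodule.span ℝ (Set.range v)) = k},
    (F v.1 : ℝ≥0∞)

/-- The (`ℝ≥0`-valued) indicator function of a product set `A_1 × ⋯ × A_k ⊆ (ℝ^n)^k`. -/
def boxIndicator {n : ℕ} {k : ℕ} (A : Fin k → Set (EuclideanSpace ℝ (Fin n))) :
    (Fin k → EuclideanSpace ℝ (Fin n)) → ℝ≥0 :=
  (Set.univ.pi A).indicator 1

/-- The function `R_M = (^ℓ 1_{E_M^ℓ})^ − M^ℓ · 1_X` on `X` (real-valued). -/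
def RMfun {n : ℕ} (ℓ : ℕ) (E : ℝ → Set (EuclideanSpace ℝ (Fin n))) (M : ℝ)
    (x : XSpace n) : ℝ :=
  (siegelHat ℓ (boxIndicator fun _ : Fin ℓ => E M) x).toReal - M ^ ℓ

/-- The Epstein zeta function `ζ_E(Λ, s) = ∑_{v ∈ Λ∖{0}} ‖v‖^{-2s}` of the lattice
attached to `x`. -/
def epsteinZeta {n : ℕ} (x : XSpace n) (s : ℝ) : ℝ :=
  ∑' v : {w : EuclideanSpace ℝ (Fin n) // w ∈ latticeX x ∧ w ≠ 0},
    ‖(v : EuclideanSpace ℝ (Fin n))‖ ^ (-2 * s)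

/-- The right action of `g ∈ SL_n(ℝ)` on a row vector `v ∈ ℝ^n`, `v ↦ v·g`,
viewed as a map of Euclidean space. -/
def rAct {n : ℕ} (g : Matrix.SpecialLinearGroup (Fin n) ℝ)
    (v : EuclideanSpace ℝ (Fin n)) : EuclideanSpace ℝ (Fin n) :=
  (WithLp.equiv 2 (Fin n → ℝ)).symm
    (Matrix.vecMul ((WithLp.equiv 2 (Fin n → ℝ)) v) (g : Matrix (Fin n) (Fin n) ℝ))

/-!
By `G`-invariance of `μ`, if a set `K` with `μ K > 1/2` is covered by `N` translates
`(· g)⁻¹' S` of `S = {β_ℓ ≤ ε}`, then `μ S ≥ 1 / (2N)`; take for `K` the image of a bounded set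
of matrices `w`. Write `n = ℓ + k` and `a_t = diag(t^k, …, t^k, t^{-ℓ}, …, t^{-ℓ})`. The first `ℓ`
rows of `w` span an `ℓ`-plane, described in one of finitely many charts (compactness) by a bounded
`ℓ × k` coordinate `p = A⁻¹B`, where `(A | B)` are the first `ℓ` rows of `w v`. Replacing `p` by
a point `q` of a `t^n`-net (of size `≍ t^{-nℓk}`) and multiplying by the unipotent `(1, -q; 0, 1)`
makes the top-right block `A (p - q) = O(t^n)`, so after `a_t` the first `ℓ` rows have size
`O(t^k)`. Hence `μ {β_ℓ ≤ D t^k} ≳ t^{nℓk}`, i.e. `μ {β_ℓ ≤ ε} ≳ ε^{nℓ}`. The bound for the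
product follows from `β_1 ⋯ β_ℓ ≤ β_ℓ^ℓ` by substituting `ε^{1/ℓ}` for `ε`.
-/

open scoped MatrixGroups

section Lattices

variable {n : ℕ}

namespace XSpace

def mk (g : SL(n, ℝ)) : XSpace n :=
  Quotient.mk (QuotientGroup.rightRel (SLZ n)) g

theorem mk_surjective : Function.Surjective (mk (n := n)) := Quotient.mk_surjective

theorem exists_mem_SLZ_out_mk_eq_mul (g : SL(n, ℝ)) :
    ∃ γ ∈ SLZ n, Quotient.out (mk g) = γ * g := by
  have h : (QuotientGroup.rightRel (SLZ n)) (Quotient.out (mk g)) g := Quotient.mk_out g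
  rw [QuotientGroup.rightRel_apply] at h
  exact ⟨Quotient.out (mk g) * g⁻¹, by simpa using (SLZ n).inv_mem h, by group⟩

theorem xmul_mk (h g : SL(n, ℝ)) : xmul (mk h) g = mk (h * g) := by
  obtain ⟨γ, hγ, hout⟩ := exists_mem_SLZ_out_mk_eq_mul h
  refine Quotient.sound (show QuotientGroup.rightRel (SLZ n) _ _ from ?_)
  rw [QuotientGroup.rightRel_apply, hout]
  simpa [mul_assoc] using (SLZ n).inv_mem hγ

end XSpace

theorem latticeOf_mul_subset_of_mem_SLZ {γ : SL(n, ℝ)} (hγ : γ ∈ SLZ n)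
    (g : SL(n, ℝ)) : latticeOf (γ * g) ⊆ latticeOf g := by
  obtain ⟨γ, rfl⟩ := hγ
  rintro v ⟨m, rfl⟩
  refine ⟨Matrix.vecMul m γ, ?_⟩
  rw [Matrix.SpecialLinearGroup.coe_mul, ← Matrix.vecMul_vecMul]
  congr 2
  funext i
  simp [Matrix.vecMul, dotProduct]

theorem latticeOf_mul_of_mem_SLZ {γ : SL(n, ℝ)} (hγ : γ ∈ SLZ n)
    (g : SL(n, ℝ)) : latticeOf (γ * g) = latticeOf g := by
  refine (latticeOf_mul_subset_of_mem_SLZ hγ g).antisymm ?_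
  simpa using latticeOf_mul_subset_of_mem_SLZ ((SLZ n).inv_mem hγ) (γ * g)

theorem latticeX_mk (g : SL(n, ℝ)) :
    latticeX (XSpace.mk g) = latticeOf g := by
  obtain ⟨γ, hγ, hout⟩ := XSpace.exists_mem_SLZ_out_mk_eq_mul g
  rw [latticeX, hout, latticeOf_mul_of_mem_SLZ hγ]

theorem row_mem_latticeOf (g : SL(n, ℝ)) (i : Fin n) :
    WithLp.toLp 2 ((g : Matrix (Fin n) (Fin n) ℝ) i) ∈ latticeOf g :=
  ⟨Pi.single i 1, by ext j; simp [Matrix.vecMul, dotProduct, Pi.single_apply]⟩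

theorem le_finrank_span_closedBall_inter_latticeX_mk {g : SL(n, ℝ)}
    {k : ℕ} {e : Fin k → Fin n} (he : Function.Injective e) {r : ℝ}
    (hrow : ∀ a, ‖WithLp.toLp 2 ((g : Matrix (Fin n) (Fin n) ℝ) (e a))‖ ≤ r) :
    k ≤ Module.finrank ℝ (Submodule.span ℝ
      (Metric.closedBall (0 : EuclideanSpace ℝ (Fin n)) r ∩ latticeX (XSpace.mk g))) := by
  have hrows : LinearIndependent ℝ (g : Matrix (Fin n) (Fin n) ℝ).row :=
    Matrix.linearIndependent_rows_of_isUnit ((Matrix.isUnit_iff_isUnit_det _).2 (by simp))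
  have hli : LinearIndependent ℝ fun a => WithLp.toLp 2 ((g : Matrix (Fin n) (Fin n) ℝ) (e a)) :=
    (hrows.comp e he).map' (WithLp.linearEquiv 2 ℝ (Fin n → ℝ)).symm.toLinearMap
      (LinearEquiv.ker _)
  calc k = Module.finrank ℝ (Submodule.span ℝ (Set.range _)) := by
        rw [finrank_span_eq_card hli, Fintype.card_fin]
    _ ≤ _ := by
        refine Submodule.finrank_mono (Submodule.span_mono ?_)
        rintro _ ⟨a, rfl⟩
        exact ⟨mem_closedBall_zero_iff.2 (hrow a), latticeX_mk g ▸ row_mem_latticeOf g (e a)⟩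

theorem beta_mk_le {g : SL(n, ℝ)} {k : ℕ} {e : Fin k → Fin n}
    (he : Function.Injective e) {r : ℝ} (hr : 0 < r)
    (hrow : ∀ a, ‖WithLp.toLp 2 ((g : Matrix (Fin n) (Fin n) ℝ) (e a))‖ ≤ r) :
    beta k (XSpace.mk g) ≤ r :=
  csInf_le ⟨0, fun _ hs => hs.1.le⟩ ⟨hr, le_finrank_span_closedBall_inter_latticeX_mk he hrow⟩

theorem beta_nonneg (k : ℕ) (x : XSpace n) : 0 ≤ beta k x :=
  Real.sInf_nonneg fun _ hs => hs.1.le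

theorem beta_mono {j k : ℕ} (hjk : j ≤ k) (hk : k ≤ n) (x : XSpace n) :
    beta j x ≤ beta k x := by
  obtain ⟨g, rfl⟩ := XSpace.mk_surjective x
  obtain ⟨r, hr⟩ := Finite.exists_le fun i => ‖WithLp.toLp 2 ((g : Matrix (Fin n) (Fin n) ℝ) i)‖
  exact csInf_le_csInf ⟨0, fun _ hs => hs.1.le⟩ ⟨max r 1, by positivity,
    le_finrank_span_closedBall_inter_latticeX_mk (Fin.castLE_injective hk)
      fun a => (hr _).trans (le_max_left _ _)⟩ fun s hs => ⟨hs.1, hjk.trans hs.2⟩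

theorem prod_beta_le_pow {ℓ : ℕ} (hℓ : ℓ ≤ n) (x : XSpace n) :
    ∏ j ∈ Finset.Icc 1 ℓ, beta j x ≤ beta ℓ x ^ ℓ :=
  calc ∏ j ∈ Finset.Icc 1 ℓ, beta j x ≤ ∏ _j ∈ Finset.Icc 1 ℓ, beta ℓ x :=
        Finset.prod_le_prod (fun j _ => beta_nonneg j x)
          fun j hj => beta_mono (Finset.mem_Icc.1 hj).2 hℓ x
    _ = beta ℓ x ^ ℓ := by simp

end Lattices

theorem IsCompact.exists_forall_abs_matrix_apply_le {X m n : Type*} [TopologicalSpace X]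
    [Fintype m] [Fintype n] {K : Set X} (hK : IsCompact K) {f : X → Matrix m n ℝ}
    (hf : ContinuousOn f K) : ∃ C, ∀ x ∈ K, ∀ i j, |f x i j| ≤ C := by
  let := Matrix.normedAddCommGroup (m := m) (n := n) (α := ℝ)
  obtain ⟨C, hC⟩ := hK.exists_bound_of_continuousOn hf
  exact ⟨C, fun x hx i j => (Matrix.norm_entry_le_entrywise_sup_norm (f x)).trans (hC x hx)⟩

theorem Matrix.abs_mul_apply_le {l m n : Type*} [Fintype m] {M : Matrix l m ℝ} {N : Matrix m n ℝ}
    {a b : ℝ} (hM : ∀ i k, |M i k| ≤ a) (hN : ∀ k j, |N k j| ≤ b) (i : l) (j : n) :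
    |(M * N) i j| ≤ Fintype.card m * (a * b) :=
  calc |(M * N) i j| ≤ ∑ k, |M i k| * |N k j| := by
        simpa only [Matrix.mul_apply, abs_mul] using
          Finset.abs_sum_le_sum_abs (fun k => M i k * N k j) Finset.univ
    _ ≤ ∑ _k : m, a * b := Finset.sum_le_sum fun k _ =>
        mul_le_mul (hM i k) (hN k j) (abs_nonneg _) ((abs_nonneg _).trans (hM i k))
    _ = Fintype.card m * (a * b) := by simp

theorem exists_finset_card_le_forall_abs_sub_le (ι : Type*) [Fintype ι] {C δ : ℝ} (hC : 0 ≤ C)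
    (hδ : 0 < δ) (hδ1 : δ ≤ 1) :
    ∃ P : Finset (ι → ℝ), (P.card : ℝ) ≤ ((2 * C + 3) / δ) ^ Fintype.card ι ∧
      ∀ x : ι → ℝ, (∀ i, |x i| ≤ C) → ∃ y ∈ P, ∀ i, |x i - y i| ≤ δ := by
  classical
  set K : ℕ := ⌈C / δ⌉₊
  set Z := Fintype.piFinset fun _ : ι => Finset.Icc (-(K : ℤ)) K
  refine ⟨Z.image fun z i => δ * z i, ?_, fun x hx => ?_⟩
  · have hK : (K : ℝ) < C / δ + 1 := Nat.ceil_lt_add_one (by positivity)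
    have hcard : ((2 * K + 1 : ℕ) : ℝ) ≤ (2 * C + 3) / δ := by
      rw [le_div_iff₀ hδ]
      push_cast
      nlinarith [div_mul_cancel₀ C hδ.ne']
    calc ((Z.image fun z i => δ * z i).card : ℝ) ≤ Z.card := by
          exact_mod_cast Finset.card_image_le
      _ = ((2 * K + 1 : ℕ) : ℝ) ^ Fintype.card ι := by
          simp only [Z, Fintype.card_piFinset, Int.card_Icc, Finset.prod_const, Finset.card_univ]
          norm_cast
          congr 1
          omega
      _ ≤ _ := pow_le_pow_left₀ (by positivity) hcard _
  · have hxK : ∀ i, |x i / δ| ≤ K := fun i => by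
      rw [abs_div, abs_of_pos hδ, div_le_iff₀ hδ]
      exact (hx i).trans ((div_le_iff₀ hδ).1 (Nat.le_ceil _))
    refine ⟨fun i => δ * ⌊x i / δ⌋, Finset.mem_image_of_mem _
      (Fintype.mem_piFinset.2 fun i => Finset.mem_Icc.2 ⟨?_, ?_⟩), fun i => ?_⟩
    · exact Int.le_floor.2 (by push_cast; linarith [neg_abs_le (x i / δ), hxK i])
    · exact Int.floor_le_iff.2 (by push_cast; linarith [le_abs_self (x i / δ), hxK i])
    · have hfract : x i - δ * ⌊x i / δ⌋ = δ * Int.fract (x i / δ) := by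
        rw [Int.fract, mul_sub, mul_div_cancel₀ _ hδ.ne']
      rw [hfract, abs_of_nonneg (mul_nonneg hδ.le (Int.fract_nonneg _))]
      exact mul_le_of_le_one_right hδ.le (Int.fract_lt_one _).le

theorem isCompact_setOf_det_eq_one_abs_le (ι : Type*) [Fintype ι] [DecidableEq ι] (m : ℝ) :
    IsCompact {M : Matrix ι ι ℝ | M.det = 1 ∧ ∀ i j, |M i j| ≤ m} := by
  refine (isCompact_univ_pi fun _ : ι => isCompact_univ_pi fun _ : ι =>
    isCompact_Icc (a := -m) (b := m)).of_isClosed_subset ?_ fun M hM =>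
      Set.mem_univ_pi.2 fun i => Set.mem_univ_pi.2 fun j => abs_le.1 (hM.2 i j)
  simp only [Set.ofPred_and, Set.ofPred_forall]
  exact (isClosed_eq continuous_id.matrix_det continuous_const).inter
    (isClosed_iInter fun i => isClosed_iInter fun j => isClosed_le (by fun_prop) continuous_const)

theorem norm_toLp_two_le_sqrt_card_mul {ι : Type*} [Fintype ι] {x : ι → ℝ} {r : ℝ} (hr : 0 ≤ r)
    (hx : ∀ i, |x i| ≤ r) : ‖WithLp.toLp 2 x‖ ≤ √(Fintype.card ι) * r := by
  rw [EuclideanSpace.norm_eq, ← Real.sqrt_sq hr, ← Real.sqrt_mul (Nat.cast_nonneg _)]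
  refine Real.sqrt_le_sqrt ?_
  calc ∑ i, ‖x i‖ ^ 2 ≤ ∑ _i : ι, r ^ 2 := Finset.sum_le_sum fun i _ => by
        simpa only [Real.norm_eq_abs, sq_abs] using pow_le_pow_left₀ (abs_nonneg _) (hx i) 2
    _ = Fintype.card ι * r ^ 2 := by simp

section Blocks

open Matrix

variable {α β : Type*} [Fintype α] [Fintype β] [DecidableEq α]

local notation "𝕄" => Matrix (α ⊕ β) (α ⊕ β) ℝ

theorem IsCompact.exists_abs_toBlocks_le {K : Set 𝕄} (hK : IsCompact K)
    (hunit : ∀ u ∈ K, IsUnit u.toBlocks₁₁.det) :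
    ∃ C, ∀ u ∈ K, (∀ i j, |u.toBlocks₁₁ i j| ≤ C) ∧
      ∀ i j, |(u.toBlocks₁₁⁻¹ * u.toBlocks₁₂) i j| ≤ C := by
  have hA : Continuous fun u : 𝕄 => u.toBlocks₁₁ :=
    continuous_id.matrix_submatrix Sum.inl Sum.inl
  have hB : Continuous fun u : 𝕄 => u.toBlocks₁₂ :=
    continuous_id.matrix_submatrix Sum.inl Sum.inr
  obtain ⟨C₁, h₁⟩ := hK.exists_forall_abs_matrix_apply_le hA.continuousOn
  obtain ⟨C₂, h₂⟩ := hK.exists_forall_abs_matrix_apply_le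
    (f := fun u : 𝕄 => u.toBlocks₁₁⁻¹ * u.toBlocks₁₂) fun u hu => by
      have hinv : ContinuousAt (fun u : 𝕄 => u.toBlocks₁₁⁻¹) u :=
        (continuousAt_matrix_inv _ ((hunit u hu).unit_spec ▸
          NormedRing.inverse_continuousAt (hunit u hu).unit)).comp hA.continuousAt
      exact ((continuous_fst.matrix_mul continuous_snd).continuousAt.comp
        (hinv.prodMk hB.continuousAt)).continuousWithinAt
  exact ⟨max C₁ C₂, fun u hu => ⟨fun i j => (h₁ u hu i j).trans (le_max_left _ _),
    fun i j => (h₂ u hu i j).trans (le_max_right _ _)⟩⟩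

variable [DecidableEq β]

def unipotentSL (q : Matrix α β ℝ) : SpecialLinearGroup (α ⊕ β) ℝ :=
  ⟨fromBlocks 1 q 0 1, by simp⟩

variable (α β) in
def scalingSL {t : ℝ} (ht : t ≠ 0) : SpecialLinearGroup (α ⊕ β) ℝ :=
  ⟨fromBlocks ((t ^ Fintype.card β) • 1) 0 0 ((t ^ Fintype.card α)⁻¹ • 1), by
    rw [det_fromBlocks_zero₂₁, det_smul, det_smul, det_one, det_one, ← pow_mul, inv_pow,
      ← pow_mul, mul_comm (Fintype.card β), mul_one, mul_one,
      mul_inv_cancel₀ (pow_ne_zero _ ht)]⟩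

theorem toBlocks₁₁_mul_unipotentSL_mul_scalingSL (u : 𝕄) (q : Matrix α β ℝ) {t : ℝ}
    (ht : t ≠ 0) : (u * (unipotentSL q : 𝕄) * (scalingSL α β ht : 𝕄)).toBlocks₁₁ =
      t ^ Fintype.card β • u.toBlocks₁₁ := by
  rw [← fromBlocks_toBlocks u]
  simp [unipotentSL, scalingSL, fromBlocks_multiply]

theorem toBlocks₁₂_mul_unipotentSL_mul_scalingSL (u : 𝕄) (q : Matrix α β ℝ) {t : ℝ}
    (ht : t ≠ 0) : (u * (unipotentSL q : 𝕄) * (scalingSL α β ht : 𝕄)).toBlocks₁₂ =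
      (t ^ Fintype.card α)⁻¹ • (u.toBlocks₁₁ * q + u.toBlocks₁₂) := by
  rw [← fromBlocks_toBlocks u]
  simp [unipotentSL, scalingSL, fromBlocks_multiply]

theorem abs_mul_unipotentSL_mul_scalingSL_apply_inl_le {u : 𝕄} {p q : Matrix α β ℝ}
    (hp : u.toBlocks₁₁ * p = u.toBlocks₁₂) {C t : ℝ} (hC : 0 ≤ C) (ht : 0 < t)
    (hA : ∀ i j, |u.toBlocks₁₁ i j| ≤ C)
    (hpq : ∀ i j, |(p - q) i j| ≤ t ^ (Fintype.card α + Fintype.card β)) (i : α) (j : α ⊕ β) :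
    |(u * (unipotentSL (-q) : 𝕄) * (scalingSL α β ht.ne' : 𝕄)) (Sum.inl i) j| ≤
      (Fintype.card α + 1) * C * t ^ Fintype.card β := by
  set a := Fintype.card α
  set b := Fintype.card β
  set M := u * (unipotentSL (-q) : 𝕄) * (scalingSL α β ht.ne' : 𝕄) with hM
  have haC : 0 ≤ a * C * t ^ b := by positivity
  cases j with
  | inl j =>
    change |M.toBlocks₁₁ i j| ≤ _
    rw [hM, toBlocks₁₁_mul_unipotentSL_mul_scalingSL, Matrix.smul_apply, smul_eq_mul, abs_mul,
      abs_of_pos (by positivity)]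
    calc t ^ b * |u.toBlocks₁₁ i j| ≤ t ^ b * C := by gcongr; exact hA i j
      _ ≤ (a + 1) * C * t ^ b := by linarith
  | inr j =>
    have hstraight : u.toBlocks₁₁ * -q + u.toBlocks₁₂ = u.toBlocks₁₁ * (p - q) := by
      rw [Matrix.mul_sub, hp, Matrix.mul_neg]
      abel
    change |M.toBlocks₁₂ i j| ≤ _
    rw [hM, toBlocks₁₂_mul_unipotentSL_mul_scalingSL, hstraight, Matrix.smul_apply, smul_eq_mul,
      abs_mul, abs_of_pos (by positivity)]
    calc (t ^ a)⁻¹ * |(u.toBlocks₁₁ * (p - q)) i j| ≤ (t ^ a)⁻¹ * (a * (C * t ^ (a + b))) := by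
          gcongr
          exact abs_mul_apply_le hA hpq i j
      _ = a * C * t ^ b := by
          rw [pow_add]
          field_simp
      _ ≤ (a + 1) * C * t ^ b := by nlinarith [pow_pos ht b]

theorem IsCompact.exists_finset_bounded_charts {Ω : Set 𝕄} (hΩ : IsCompact Ω)
    (hdet : ∀ w ∈ Ω, w.det = 1) :
    ∃ (T : Finset (SpecialLinearGroup (α ⊕ β) ℝ)) (C : ℝ), 0 ≤ C ∧ ∀ w ∈ Ω, ∃ v ∈ T,
      let u := w * (v : 𝕄)
      IsUnit u.toBlocks₁₁.det ∧ (∀ i j, |u.toBlocks₁₁ i j| ≤ C) ∧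
        ∀ i j, |(u.toBlocks₁₁⁻¹ * u.toBlocks₁₂) i j| ≤ C := by
  set d : SpecialLinearGroup (α ⊕ β) ℝ → 𝕄 → ℝ := fun v w => |(w * (v : 𝕄)).toBlocks₁₁.det|
  have hd : ∀ v, Continuous (d v) := fun v =>
    ((continuous_id.matrix_mul continuous_const).matrix_submatrix Sum.inl Sum.inl).matrix_det.abs
  have hunit : ∀ {v w}, 1 / 2 ≤ d v w → IsUnit (w * (v : 𝕄)).toBlocks₁₁.det := fun h =>
    (abs_pos.1 ((by norm_num : (0 : ℝ) < 1 / 2).trans_le h)).isUnit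
  -- the chart centred at `w⁻¹` maps `w` to `1`, whose top-left block has determinant `1`
  obtain ⟨T, hT⟩ := hΩ.elim_finite_subcover (fun v => {w | 1 / 2 < d v w})
    (fun v => isOpen_lt continuous_const (hd v)) fun w hw => by
      set w₀ : SpecialLinearGroup (α ⊕ β) ℝ := ⟨w, hdet w hw⟩
      have hone : w * ((w₀⁻¹ : SpecialLinearGroup (α ⊕ β) ℝ) : 𝕄) = 1 := by
        change w * adjugate w = 1
        rw [mul_adjugate, hdet w hw, one_smul]
      refine Set.mem_iUnion.2 ⟨w₀⁻¹, ?_⟩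
      simp only [d, Set.mem_ofPred_eq, hone, ← fromBlocks_one, toBlocks_fromBlocks₁₁, det_one]
      norm_num
  have hbound : ∀ v, ∃ C, ∀ w ∈ Ω ∩ {w | 1 / 2 ≤ d v w},
      (∀ i j, |(w * (v : 𝕄)).toBlocks₁₁ i j| ≤ C) ∧
        ∀ i j, |((w * (v : 𝕄)).toBlocks₁₁⁻¹ * (w * (v : 𝕄)).toBlocks₁₂) i j| ≤ C := fun v => by
    obtain ⟨C, hC⟩ := ((hΩ.inter_right (isClosed_le continuous_const (hd v))).image
      (continuous_id.matrix_mul continuous_const)).exists_abs_toBlocks_le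
        (by rintro _ ⟨w, hw, rfl⟩; exact hunit hw.2)
    exact ⟨C, fun w hw => hC _ ⟨w, hw, rfl⟩⟩
  choose C hC using hbound
  obtain ⟨C', hC'⟩ := Finset.exists_le (T.image C)
  refine ⟨T, max C' 0, le_max_right _ _, fun w hw => ?_⟩
  obtain ⟨v, hvT, hv⟩ := Set.mem_iUnion₂.1 (hT hw)
  have hwv : w ∈ Ω ∩ {w | 1 / 2 ≤ d v w} := ⟨hw, (show 1 / 2 < d v w from hv).le⟩
  have hCv : C v ≤ max C' 0 := (hC' _ (Finset.mem_image_of_mem C hvT)).trans (le_max_left _ _)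
  exact ⟨v, hvT, hunit hwv.2, fun i j => ((hC v w hwv).1 i j).trans hCv,
    fun i j => ((hC v w hwv).2 i j).trans hCv⟩

theorem IsCompact.exists_finset_forall_abs_mul_apply_inl_le {Ω : Set 𝕄} (hΩ : IsCompact Ω)
    (hdet : ∀ w ∈ Ω, w.det = 1) :
    ∃ D, 0 < D ∧ ∀ t : ℝ, 0 < t → t ≤ 1 → ∃ G : Finset (SpecialLinearGroup (α ⊕ β) ℝ),
      (G.card : ℝ) ≤ D / t ^ ((Fintype.card α + Fintype.card β) *
        (Fintype.card α * Fintype.card β)) ∧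
      ∀ w ∈ Ω, ∃ g ∈ G, ∀ i j, |(w * (g : 𝕄)) (Sum.inl i) j| ≤ D * t ^ Fintype.card β := by
  classical
  obtain ⟨T, C, hC, hT⟩ := hΩ.exists_finset_bounded_charts hdet
  set a := Fintype.card α
  set b := Fintype.card β
  have hTC : 0 ≤ T.card * (2 * C + 3) ^ (a * b) := by positivity
  set D : ℝ := T.card * (2 * C + 3) ^ (a * b) + (a + 1) * C + 1
  refine ⟨D, by positivity, fun t ht ht1 => ?_⟩
  obtain ⟨P, hPcard, hP⟩ := exists_finset_card_le_forall_abs_sub_le (α × β) hC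
    (pow_pos ht (a + b)) (pow_le_one₀ ht.le ht1)
  set g : SpecialLinearGroup (α ⊕ β) ℝ × (α × β → ℝ) → SpecialLinearGroup (α ⊕ β) ℝ :=
    fun vq => vq.1 * unipotentSL (-of fun i j => vq.2 (i, j)) * scalingSL α β ht.ne'
  refine ⟨(T ×ˢ P).image g, ?_, fun w hw => ?_⟩
  · calc (((T ×ˢ P).image g).card : ℝ) ≤ T.card * P.card := by
          exact_mod_cast Finset.card_image_le.trans (Finset.card_product T P).le
      _ ≤ T.card * ((2 * C + 3) / t ^ (a + b)) ^ (a * b) := by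
          rw [← Fintype.card_prod]
          gcongr
      _ = T.card * (2 * C + 3) ^ (a * b) / t ^ ((a + b) * (a * b)) := by
          rw [div_pow, ← pow_mul, mul_div_assoc]
      _ ≤ D / t ^ ((a + b) * (a * b)) := by
          gcongr
          linarith [mul_nonneg (by positivity : (0 : ℝ) ≤ a + 1) hC]
  · obtain ⟨v, hvT, hunit, hAC, hpC⟩ := hT w hw
    obtain ⟨q, hqP, hq⟩ := hP _ fun ij => hpC ij.1 ij.2
    refine ⟨g (v, q), Finset.mem_image_of_mem g (Finset.mem_product.2 ⟨hvT, hqP⟩),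
      fun i j => ?_⟩
    have hwg : w * (g (v, q) : 𝕄) = w * (v : 𝕄) *
        (unipotentSL (-of fun i j => q (i, j)) : 𝕄) * (scalingSL α β ht.ne' : 𝕄) := by
      change w * ((v : 𝕄) * _ * _) = _
      simp only [Matrix.mul_assoc]
    rw [hwg]
    refine (abs_mul_unipotentSL_mul_scalingSL_apply_inl_le
      (mul_nonsing_inv_cancel_left _ _ hunit) hC ht hAC (fun k l => hq (k, l)) i j).trans ?_
    gcongr
    linarith

end Blocks

theorem Matrix.mul_reindex_apply {ι κ : Type*} [Fintype ι] [Fintype κ] (w : Matrix ι ι ℝ)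
    (g : Matrix κ κ ℝ) (e : κ ≃ ι) (x : κ) (j : ι) :
    (w * Matrix.reindex e e g) (e x) j = (w.submatrix e e * g) x (e.symm j) := by
  rw [Matrix.reindex_apply, show w = (w.submatrix e e).submatrix e.symm e.symm by simp,
    Matrix.submatrix_mul_equiv, Matrix.submatrix_apply, Equiv.symm_apply_apply]
  simp

theorem exists_finset_forall_beta_mk_mul_le (ℓ k : ℕ) (m : ℝ) :
    ∃ D, 1 ≤ D ∧ ∀ t : ℝ, 0 < t → t ≤ 1 →
      ∃ G : Finset SL(ℓ + k, ℝ), (G.card : ℝ) ≤ D / t ^ ((ℓ + k) * (ℓ * k)) ∧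
        ∀ w : SL(ℓ + k, ℝ), (∀ i j, |(w : Matrix (Fin (ℓ + k)) (Fin (ℓ + k)) ℝ) i j| ≤ m) →
          ∃ g ∈ G, beta ℓ (XSpace.mk (w * g)) ≤ D * t ^ k := by
  classical
  set e : Fin ℓ ⊕ Fin k ≃ Fin (ℓ + k) := finSumFinEquiv
  obtain ⟨D, hD, hcover⟩ := (isCompact_setOf_det_eq_one_abs_le (Fin ℓ ⊕ Fin k) m)
    |>.exists_finset_forall_abs_mul_apply_inl_le fun _ hw => hw.1
  simp only [Fintype.card_fin] at hcover
  set D' := (√(ℓ + k : ℕ) + 1) * D + 1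
  refine ⟨D', by nlinarith [Real.sqrt_nonneg (ℓ + k : ℕ)], fun t ht ht1 => ?_⟩
  obtain ⟨G, hGcard, hG⟩ := hcover t ht ht1
  set reindexSL : Matrix.SpecialLinearGroup (Fin ℓ ⊕ Fin k) ℝ → SL(ℓ + k, ℝ) :=
    fun g => ⟨Matrix.reindex e e g, by rw [Matrix.det_reindex_self]; exact g.2⟩
  refine ⟨G.image reindexSL, ?_, fun w hw => ?_⟩
  · calc ((G.image reindexSL).card : ℝ) ≤ D / t ^ ((ℓ + k) * (ℓ * k)) :=
          le_trans (by exact_mod_cast Finset.card_image_le) hGcard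
      _ ≤ D' / t ^ ((ℓ + k) * (ℓ * k)) := by
          gcongr
          nlinarith [Real.sqrt_nonneg (ℓ + k : ℕ)]
  · set w' := (w : Matrix (Fin (ℓ + k)) (Fin (ℓ + k)) ℝ).submatrix e e
    obtain ⟨g, hgG, hg⟩ := hG w' ⟨by simp [w', Matrix.det_submatrix_equiv_self], fun i j => hw _ _⟩
    refine ⟨reindexSL g, Finset.mem_image_of_mem _ hgG,
      beta_mk_le (Fin.castAdd_injective ℓ k) (by positivity) fun a => ?_⟩
    have hrow : ∀ j, ((w * reindexSL g : SL(ℓ + k, ℝ)) :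
        Matrix (Fin (ℓ + k)) (Fin (ℓ + k)) ℝ) (Fin.castAdd k a) j =
          (w' * (g : Matrix (Fin ℓ ⊕ Fin k) (Fin ℓ ⊕ Fin k) ℝ)) (Sum.inl a) (e.symm j) :=
      Matrix.mul_reindex_apply _ _ e (Sum.inl a)
    calc _ ≤ √(Fintype.card (Fin (ℓ + k))) * (D * t ^ k) :=
          norm_toLp_two_le_sqrt_card_mul (by positivity) fun j => hrow j ▸ hg a (e.symm j)
      _ ≤ D' * t ^ k := by
          rw [Fintype.card_fin, ← mul_assoc]
          gcongr
          nlinarith [Real.sqrt_nonneg (ℓ + k : ℕ)]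

theorem measure_le_card_mul_of_subset_biUnion_preimage {X ι : Type*} [MeasurableSpace X]
    {μ : Measure X} {f : ι → X → X} {s : Finset ι}
    (hf : ∀ i ∈ s, ∀ t, MeasurableSet t → μ (f i ⁻¹' t) = μ t) {K S : Set X}
    (hKS : K ⊆ ⋃ i ∈ s, f i ⁻¹' S) : μ K ≤ s.card * μ S :=
  calc μ K ≤ ∑ i ∈ s, μ (f i ⁻¹' S) := (measure_mono hKS).trans (measure_biUnion_finset_le s _)
    _ ≤ ∑ _i ∈ s, μ S := Finset.sum_le_sum fun i hi =>
        calc μ (f i ⁻¹' S) ≤ μ (f i ⁻¹' toMeasurable μ S) :=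
              measure_mono (Set.preimage_mono (subset_toMeasurable μ S))
          _ = μ S := by rw [hf i hi _ (measurableSet_toMeasurable μ S), measure_toMeasurable]
    _ = s.card * μ S := by rw [Finset.sum_const, nsmul_eq_mul]

theorem XSpace.exists_lt_measure_mk_image {n : ℕ} (μ : Measure (XSpace n)) {r : ℝ≥0∞}
    (hr : r < μ Set.univ) : ∃ m : ℝ, r < μ (XSpace.mk ''
      {w | ∀ i j, |(w : Matrix (Fin n) (Fin n) ℝ) i j| ≤ m}) := by
  set V : ℝ → Set (XSpace n) :=
    fun m => XSpace.mk '' {w | ∀ i j, |(w : Matrix (Fin n) (Fin n) ℝ) i j| ≤ m}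
  have hV : Monotone V := fun m m' h => Set.image_mono fun w hw i j => (hw i j).trans h
  have hunion : ⋃ m, V m = Set.univ := Set.eq_univ_of_forall fun x => by
    obtain ⟨g, rfl⟩ := XSpace.mk_surjective x
    obtain ⟨m, hm⟩ := Finite.exists_le fun ij : Fin n × Fin n =>
      |(g : Matrix (Fin n) (Fin n) ℝ) ij.1 ij.2|
    exact Set.mem_iUnion.2 ⟨m, g, fun i j => hm (i, j), rfl⟩
  rw [← hunion, hV.measure_iUnion] at hr
  exact lt_iSup_iff.1 hr

theorem exists_forall_ofReal_le_measure_beta_le {ℓ k : ℕ} (μ : Measure (XSpace (ℓ + k)))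
    [IsProbabilityMeasure μ]
    (hinv : ∀ (g : SL(ℓ + k, ℝ)) (s : Set (XSpace (ℓ + k))),
      MeasurableSet s → μ ((fun x => xmul x g) ⁻¹' s) = μ s) :
    ∃ D, 1 ≤ D ∧ ∀ t : ℝ, 0 < t → t ≤ 1 →
      ENNReal.ofReal (t ^ ((ℓ + k) * (ℓ * k)) / (2 * D)) ≤ μ {x | beta ℓ x ≤ D * t ^ k} := by
  obtain ⟨m, hm⟩ := XSpace.exists_lt_measure_mk_image μ (r := 2⁻¹) (by simp)
  obtain ⟨D, hD, hcover⟩ := exists_finset_forall_beta_mk_mul_le ℓ k m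
  refine ⟨D, hD, fun t ht ht1 => ?_⟩
  obtain ⟨G, hGcard, hG⟩ := hcover t ht ht1
  set S := {x | beta ℓ x ≤ D * t ^ k}
  have hKS : XSpace.mk '' {w | ∀ i j, |(w : Matrix (Fin (ℓ + k)) (Fin (ℓ + k)) ℝ) i j| ≤ m} ⊆
      ⋃ g ∈ G, (fun x => xmul x g) ⁻¹' S := by
    rintro _ ⟨w, hw, rfl⟩
    obtain ⟨g, hg, hβ⟩ := hG w hw
    exact Set.mem_biUnion hg (by simpa [S, XSpace.xmul_mk] using hβ)
  have hμS : (1 : ℝ) / 2 ≤ G.card * μ.real S := by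
    have := ENNReal.toReal_mono (by finiteness) (hm.trans_le
      (measure_le_card_mul_of_subset_biUnion_preimage (fun g _ => hinv g) hKS)).le
    simpa [ENNReal.toReal_mul, measureReal_def] using this
  have hcard : G.card * t ^ ((ℓ + k) * (ℓ * k)) ≤ D := (le_div_iff₀ (by positivity)).1 hGcard
  rw [← ofReal_measureReal]
  refine ENNReal.ofReal_le_ofReal ((div_le_iff₀ (by positivity)).2 ?_)
  nlinarith [mul_le_mul_of_nonneg_right hcard (measureReal_nonneg (μ := μ) (s := S)),
    mul_le_mul_of_nonneg_right hμS (pow_pos ht ((ℓ + k) * (ℓ * k))).le]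

theorem exists_forall_ofReal_mul_pow_le_measure_beta_le {ℓ k : ℕ} (hk : k ≠ 0)
    (μ : Measure (XSpace (ℓ + k))) [IsProbabilityMeasure μ]
    (hinv : ∀ (g : SL(ℓ + k, ℝ)) (s : Set (XSpace (ℓ + k))),
      MeasurableSet s → μ ((fun x => xmul x g) ⁻¹' s) = μ s) :
    ∃ c, 0 < c ∧ ∀ ε : ℝ, 0 < ε → ε < 1 →
      ENNReal.ofReal (c * ε ^ ((ℓ + k) * ℓ)) ≤ μ {x | beta ℓ x ≤ ε} := by
  obtain ⟨D, hD, hμ⟩ := exists_forall_ofReal_le_measure_beta_le μ hinv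
  refine ⟨(2 * D ^ ((ℓ + k) * ℓ + 1))⁻¹, by positivity, fun ε hε hε1 => ?_⟩
  set t := (ε / D) ^ ((k : ℝ)⁻¹)
  have htk : t ^ k = ε / D := Real.rpow_inv_natCast_pow (by positivity) hk
  have ht1 : t ≤ 1 := Real.rpow_le_one (by positivity)
    ((div_le_one (by positivity)).2 (hε1.le.trans hD)) (by positivity)
  calc ENNReal.ofReal ((2 * D ^ ((ℓ + k) * ℓ + 1))⁻¹ * ε ^ ((ℓ + k) * ℓ))
      = ENNReal.ofReal (t ^ ((ℓ + k) * (ℓ * k)) / (2 * D)) := by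
        rw [show (ℓ + k) * (ℓ * k) = k * ((ℓ + k) * ℓ) by ring, pow_mul t, htk, div_pow, pow_succ]
        congr 1
        field_simp
    _ ≤ μ {x | beta ℓ x ≤ D * t ^ k} := hμ t (by positivity) ht1
    _ = μ {x | beta ℓ x ≤ ε} := by rw [htk, mul_div_cancel₀ _ (by positivity)]

theorem stmt9_general (n : ℕ)
    (μ : Measure (XSpace n)) [IsProbabilityMeasure μ]
    (hinv : ∀ (g : Matrix.SpecialLinearGroup (Fin n) ℝ) (s : Set (XSpace n)),
      MeasurableSet s → μ ((fun x => xmul x g) ⁻¹' s) = μ s)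
    (ℓ : ℕ) (hℓ1 : 1 ≤ ℓ) (hℓ2 : ℓ ≤ n - 1) :
    ∃ ε₀ : ℝ, 0 < ε₀ ∧ ∃ c : ℝ, 0 < c ∧ ∀ ε : ℝ, 0 < ε → ε < ε₀ →
      ENNReal.ofReal (c * ε ^ (n * ℓ)) ≤ μ {x : XSpace n | beta ℓ x ≤ ε} ∧
      ENNReal.ofReal (c * ε ^ n) ≤
        μ {x : XSpace n | (∏ j ∈ Finset.Icc 1 ℓ, beta j x) ≤ ε} := by
  obtain ⟨k, rfl⟩ : ∃ k, n = ℓ + k := ⟨n - ℓ, by omega⟩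
  obtain ⟨c, hc, hμ⟩ := exists_forall_ofReal_mul_pow_le_measure_beta_le (by omega) μ hinv
  refine ⟨1, one_pos, c, hc, fun ε hε hε1 => ⟨hμ ε hε hε1, ?_⟩⟩
  set ε' := ε ^ ((ℓ : ℝ)⁻¹)
  have hε' : ε' ^ ℓ = ε := Real.rpow_inv_natCast_pow hε.le (by omega)
  calc ENNReal.ofReal (c * ε ^ (ℓ + k)) = ENNReal.ofReal (c * ε' ^ ((ℓ + k) * ℓ)) := by
        rw [pow_mul', hε']
    _ ≤ μ {x | beta ℓ x ≤ ε'} :=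
        hμ ε' (by positivity) (Real.rpow_lt_one hε.le hε1 (by positivity))
    _ ≤ μ {x | ∏ j ∈ Finset.Icc 1 ℓ, beta j x ≤ ε} := measure_mono fun x hx =>
        (prod_beta_le_pow (by omega) x).trans (hε' ▸ pow_le_pow_left₀ (beta_nonneg ℓ x) hx ℓ)

/-- For every integer `1 ≤ ℓ ≤ n−1` there are `ε₀ = ε₀(n,ℓ) > 0` and
`c = c(n,ℓ) > 0` such that for every `ε ∈ (0, ε₀)`,
`c · ε^{nℓ} ≤ μ_X({Λ : β_ℓ(Λ) ≤ ε})` and `c · ε^n ≤ μ_X({Λ : ∏_{j=1}^ℓ β_j(Λ) ≤ ε})`. -/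
theorem stmt9 (n : ℕ) (hn : 3 ≤ n)
    (μ : Measure (XSpace n)) [IsProbabilityMeasure μ]
    (hinv : ∀ (g : Matrix.SpecialLinearGroup (Fin n) ℝ) (s : Set (XSpace n)),
      MeasurableSet s → μ ((fun x => xmul x g) ⁻¹' s) = μ s)
    (ℓ : ℕ) (hℓ1 : 1 ≤ ℓ) (hℓ2 : ℓ ≤ n - 1) :
    ∃ ε₀ : ℝ, 0 < ε₀ ∧ ∃ c : ℝ, 0 < c ∧ ∀ ε : ℝ, 0 < ε → ε < ε₀ →
      ENNReal.ofReal (c * ε ^ (n * ℓ)) ≤ μ {x : XSpace n | beta ℓ x ≤ ε} ∧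
      ENNReal.ofReal (c * ε ^ n) ≤
        μ {x : XSpace n | (∏ j ∈ Finset.Icc 1 ℓ, beta j x) ≤ ε} :=
  stmt9_general n μ hinv ℓ hℓ1 hℓ2
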